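/- arXiv:1007.0938 — 2 statements merged into one kernel-verified Lean document; each statement's English description precedes it below -/
import Mathlib

section
/- Let V : ℝ → ℝ satisfy ∫_ℝ |V(x)|(1+|x|) dx < ∞, let k ∈ ℝ \ {0}, and let (T, R) be scattering data for -d²/dx² - V at k. Then |R| ≤ 1. -/
open MeasureTheory Filter Real

noncomputable section

/-- `-κ²` (with `κ > 0`) is a negative eigenvalue of the Schrödinger operator
`H_h(y) = -h² d²/dx² - y`. -/
def IsNegEig (h : ℝ) (y : ℝ → ℝ) (κ : ℝ) : Prop :=
  0 < κ ∧ ∃ ψ : ℝ → ℝ, ψ ≠ 0 ∧ ContDiff ℝ 2 ψ ∧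
    Integrable (fun x => (ψ x) ^ 2) ∧
    ∀ x : ℝ, -h ^ 2 * deriv (deriv ψ) x - y x * ψ x = -κ ^ 2 * ψ x

/-- `E_h(y)`: the set of `κ > 0` such that `-κ²` is a negative eigenvalue of `H_h(y)`. -/
def negEigSet (h : ℝ) (y : ℝ → ℝ) : Set ℝ := {κ | IsNegEig h y κ}

/-- `ψ` is an `L²`-normalized eigenfunction of `H_h(y)` with eigenvalue `-κ²`. -/
def IsNormalizedEigfun (h : ℝ) (y : ℝ → ℝ) (κ : ℝ) (ψ : ℝ → ℝ) : Prop :=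
  ψ ≠ 0 ∧ ContDiff ℝ 2 ψ ∧ Integrable (fun x => (ψ x) ^ 2) ∧
  (∀ x : ℝ, -h ^ 2 * deriv (deriv ψ) x - y x * ψ x = -κ ^ 2 * ψ x) ∧
  ∫ x : ℝ, (ψ x) ^ 2 = 1

/-- The class `B` of potentials: nonnegative, twice differentiable with integrable
first and second derivatives, and in the Faddeev class `L¹₁(ℝ)`. -/
def InClassB (y : ℝ → ℝ) : Prop :=
  (∀ x : ℝ, 0 ≤ y x) ∧
  (∀ x : ℝ, DifferentiableAt ℝ y x) ∧
  (∀ x : ℝ, DifferentiableAt ℝ (deriv y) x) ∧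
  Integrable (deriv y) ∧ Integrable (deriv (deriv y)) ∧
  Integrable (fun x => |y x| * (1 + |x|))

/-- `(T, R)` is scattering data for `-d²/dx² - V` at `k`. -/
def IsScatteringData (V : ℝ → ℝ) (k : ℝ) (T R : ℂ) : Prop :=
  ∃ ψ : ℝ → ℂ, ContDiff ℝ 2 ψ ∧
    (∀ x : ℝ, -deriv (deriv ψ) x - (V x : ℂ) * ψ x = (k : ℂ) ^ 2 * ψ x) ∧
    Tendsto (fun x : ℝ => ψ x - T * Complex.exp (-(Complex.I * k * x))) atBot (nhds 0) ∧
    Tendsto (fun x : ℝ =>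
      ψ x - (Complex.exp (-(Complex.I * k * x)) + R * Complex.exp (Complex.I * k * x)))
      atTop (nhds 0)

/-- The operator `-d²/dx² - V` is reflectionless. -/
def Reflectionless (V : ℝ → ℝ) : Prop :=
  ∀ k : ℝ, k ≠ 0 → ∃ T : ℂ, IsScatteringData V k T 0

/-!
Since `V` is real, the Wronskian `ψ ψ̄' - ψ' ψ̄` of a solution and its conjugate is constant.
Evaluated against the plane waves `e^{-ikx} + R e^{ikx}` at `+∞` and `T e^{-ikx}` at `-∞` it
equals `2ik (1 - |R|²)` and `2ik |T|²`, so `|R|² + |T|² = 1`. This needs `ψ'` to follow the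
derivative of the plane wave as well. It does because `ψ` is bounded, so that `ψ'' + k²ψ = -Vψ`
is integrable: for `φ = ψ - w`, `w` the plane wave, the modulated quantities
`e^{±ikx} (φ' ∓ ikφ)` then have integrable derivatives, hence limits, and `φ → 0` forces these
limits to vanish.
-/

open Set Complex ComplexConjugate Topology

theorem hasDerivAt_exp_I_mul (k x : ℝ) :
    HasDerivAt (fun t : ℝ => exp (I * k * t)) (I * k * exp (I * k * x)) x := by
  simpa [mul_comm] using (((hasDerivAt_id (x : ℂ)).const_mul (I * k)).cexp).comp_ofReal

theorem norm_exp_I_mul (k x : ℝ) : ‖exp (I * k * x)‖ = 1 := by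
  simp [norm_exp]

theorem norm_exp_neg_I_mul (k x : ℝ) : ‖exp (-(I * k * x))‖ = 1 := by
  simp [norm_exp]

theorem exists_tendsto_deriv_sub_I_mul_sub_exp_mul {k : ℝ} {φ φ' f : ℝ → ℂ}
    (hφ : ∀ x, HasDerivAt φ (φ' x) x) (hφ' : ∀ x, HasDerivAt φ' (f x - k ^ 2 * φ x) x)
    (hf : IntegrableOn f (Ioi 0)) :
    ∃ L : ℂ, Tendsto (fun x : ℝ => φ' x - I * k * φ x - exp (-(I * k * x)) * L) atTop (𝓝 0) := by
  set u : ℝ → ℂ := fun x => exp (I * k * x) * (φ' x - I * k * φ x)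
  have hu : ∀ x : ℝ, HasDerivAt u (exp (I * k * x) * f x) x := fun x => by
    refine ((hasDerivAt_exp_I_mul k x).mul
      ((hφ' x).fun_sub ((hφ x).const_mul (I * k)))).congr_deriv ?_
    linear_combination -(k : ℂ) ^ 2 * exp (I * k * (x : ℂ)) * φ x * I_sq
  have hint : IntegrableOn (fun x : ℝ => exp (I * k * x) * f x) (Ioi 0) :=
    hf.bdd_mul (by fun_prop) (ae_of_all _ fun x => (norm_exp_I_mul k x).le)
  obtain ⟨L, hL⟩ : ∃ L, Tendsto u atTop (𝓝 L) :=
    ⟨_, tendsto_limUnder_of_hasDerivAt_of_integrableOn_Ioi (fun x _ => hu x) hint⟩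
  have hdemod : ∀ x : ℝ, φ' x - I * k * φ x - exp (-(I * k * x)) * L
      = exp (-(I * k * x)) * (u x - L) := fun x => by
    rw [mul_sub, ← mul_assoc, ← Complex.exp_add, neg_add_cancel, Complex.exp_zero, one_mul]
  refine ⟨L, ?_⟩
  rw [tendsto_zero_iff_norm_tendsto_zero]
  simpa [hdemod, norm_exp_neg_I_mul] using (tendsto_sub_nhds_zero_iff.2 hL).norm

theorem eq_zero_of_tendsto_exp_mul_sub_exp_mul {k : ℝ} (hk : k ≠ 0) {L M : ℂ}
    (h : Tendsto (fun x : ℝ => exp (I * k * x) * M - exp (-(I * k * x)) * L) atTop (𝓝 0)) :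
    L = 0 := by
  have hk' : (k : ℂ) ≠ 0 := ofReal_ne_zero.2 hk
  have hshift : ∀ x : ℝ, exp (I * k * ↑(x + π / (2 * k))) = I * exp (I * k * x) := fun x => by
    rw [show I * k * ↑(x + π / (2 * k)) = I * k * x + π / 2 * I by push_cast; field_simp,
      Complex.exp_add, exp_pi_div_two_mul_I, mul_comm]
  have hshift' : ∀ x : ℝ, exp (-(I * k * ↑(x + π / (2 * k)))) = -I * exp (-(I * k * x)) :=
    fun x => by rw [Complex.exp_neg, hshift, mul_inv, inv_I, ← Complex.exp_neg]
  -- for `g x = e^{ikx} M - e^{-ikx} L`, `g (x + π/(2k)) - I g x = 2I e^{-ikx} L` has norm `2‖L‖`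
  have h2 := ((h.comp (tendsto_atTop_add_const_right _ (π / (2 * k)) tendsto_id)).sub
    (h.const_mul I)).norm
  simp only [Function.comp_apply, id, hshift, hshift', mul_zero, sub_zero, norm_zero] at h2
  have hconst : ∀ x : ℝ, ‖I * exp (I * k * x) * M - -I * exp (-(I * k * x)) * L
      - I * (exp (I * k * x) * M - exp (-(I * k * x)) * L)‖ = 2 * ‖L‖ := fun x => by
    rw [show I * exp (I * k * x) * M - -I * exp (-(I * k * x)) * L
      - I * (exp (I * k * x) * M - exp (-(I * k * x)) * L)
      = 2 * I * exp (-(I * k * x)) * L by ring]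
    simp [norm_exp_neg_I_mul]
  simp only [hconst] at h2
  simpa using tendsto_nhds_unique tendsto_const_nhds h2

theorem tendsto_deriv_sub_atTop_of_tendsto_sub {k : ℝ} (hk : k ≠ 0) {ψ ψ' w w' f : ℝ → ℂ}
    (hψ : ∀ x, HasDerivAt ψ (ψ' x) x) (hψ' : ∀ x, HasDerivAt ψ' (f x - k ^ 2 * ψ x) x)
    (hw : ∀ x, HasDerivAt w (w' x) x) (hw' : ∀ x, HasDerivAt w' (-(k ^ 2 * w x)) x)
    (hf : IntegrableOn f (Ioi 0)) (h : Tendsto (fun x => ψ x - w x) atTop (𝓝 0)) :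
    Tendsto (fun x => ψ' x - w' x) atTop (𝓝 0) := by
  have hφ : ∀ x, HasDerivAt (fun x => ψ x - w x) (ψ' x - w' x) x :=
    fun x => (hψ x).fun_sub (hw x)
  have hφ' : ∀ x, HasDerivAt (fun x => ψ' x - w' x) (f x - k ^ 2 * (ψ x - w x)) x :=
    fun x => ((hψ' x).fun_sub (hw' x)).congr_deriv (by ring)
  obtain ⟨L, hL⟩ := exists_tendsto_deriv_sub_I_mul_sub_exp_mul hφ hφ' hf
  obtain ⟨M, hM⟩ := exists_tendsto_deriv_sub_I_mul_sub_exp_mul (k := -k) hφ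
    (fun x => (hφ' x).congr_deriv (by push_cast; ring)) hf
  have hLM : Tendsto (fun x : ℝ => exp (I * k * x) * M - exp (-(I * k * x)) * L) atTop (𝓝 0) := by
    have := (hL.sub hM).add ((h.const_mul (2 * I * k)))
    simp only [sub_zero, add_zero, mul_zero] at this
    refine this.congr fun x => ?_
    push_cast
    ring_nf
  have hL0 := eq_zero_of_tendsto_exp_mul_sub_exp_mul hk hLM
  subst hL0
  simpa using hL.add (h.const_mul (I * k))

theorem hasDerivAt_comp_neg {E : Type*} [NormedAddCommGroup E] [NormedSpace ℝ E] {f f' : ℝ → E}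
    (hf : ∀ x, HasDerivAt f (f' x) x) (x : ℝ) :
    HasDerivAt (fun x => f (-x)) (-f' (-x)) x := by
  have := (hf (-x)).scomp x (hasDerivAt_neg x)
  rwa [neg_one_smul] at this

theorem tendsto_deriv_sub_atBot_of_tendsto_sub {k : ℝ} (hk : k ≠ 0) {ψ ψ' w w' f : ℝ → ℂ}
    (hψ : ∀ x, HasDerivAt ψ (ψ' x) x) (hψ' : ∀ x, HasDerivAt ψ' (f x - k ^ 2 * ψ x) x)
    (hw : ∀ x, HasDerivAt w (w' x) x) (hw' : ∀ x, HasDerivAt w' (-(k ^ 2 * w x)) x)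
    (hf : IntegrableOn f (Iio 0)) (h : Tendsto (fun x => ψ x - w x) atBot (𝓝 0)) :
    Tendsto (fun x => ψ' x - w' x) atBot (𝓝 0) := by
  have hf' : IntegrableOn (fun x => f (-x)) (Ioi 0) := by
    simpa [Function.comp_def] using
      ((Measure.measurePreserving_neg volume).integrableOn_comp_preimage
        (Homeomorph.neg ℝ).measurableEmbedding).2 hf
  have := tendsto_deriv_sub_atTop_of_tendsto_sub hk (hasDerivAt_comp_neg hψ)
    (fun x => (hasDerivAt_comp_neg hψ' x).neg.congr_deriv (by ring)) (hasDerivAt_comp_neg hw)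
    (fun x => (hasDerivAt_comp_neg hw' x).neg.congr_deriv (by ring)) hf'
    (h.comp tendsto_neg_atTop_atBot)
  rw [← neg_zero]
  refine (this.neg.comp tendsto_neg_atBot_atTop).congr fun x => ?_
  simp only [Function.comp_apply, neg_neg]
  ring

def planeWave (k : ℝ) (a b : ℂ) (x : ℝ) : ℂ :=
  a * exp (-(I * k * x)) + b * exp (I * k * x)

theorem hasDerivAt_planeWave (k : ℝ) (a b : ℂ) (x : ℝ) :
    HasDerivAt (planeWave k a b) (planeWave k (-(I * k * a)) (I * k * b) x) x := by
  have hneg : HasDerivAt (fun t : ℝ => exp (-(I * k * t))) (-(I * k) * exp (-(I * k * x))) x := by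
    simpa using hasDerivAt_exp_I_mul (-k) x
  exact ((hneg.const_mul a).add ((hasDerivAt_exp_I_mul k x).const_mul b)).congr_deriv
    (by simp only [planeWave]; ring)

theorem hasDerivAt_planeWave_deriv (k : ℝ) (a b : ℂ) (x : ℝ) :
    HasDerivAt (planeWave k (-(I * k * a)) (I * k * b)) (-(k ^ 2 * planeWave k a b x)) x :=
  (hasDerivAt_planeWave k _ _ x).congr_deriv <| by
    simp only [planeWave]
    linear_combination (k : ℂ) ^ 2 * (a * exp (-(I * k * x)) + b * exp (I * k * x)) * I_sq

theorem norm_planeWave_le (k : ℝ) (a b : ℂ) (x : ℝ) : ‖planeWave k a b x‖ ≤ ‖a‖ + ‖b‖ := by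
  refine (norm_add_le _ _).trans ?_
  simp [norm_exp_I_mul, norm_exp_neg_I_mul]

theorem planeWave_of_exp_eq_one {k : ℝ} {x : ℝ} (hx : exp (I * k * x) = 1) (a b : ℂ) :
    planeWave k a b x = a + b := by
  simp [planeWave, Complex.exp_neg, hx]

def conjWronskian (ψ ψ' : ℝ → ℂ) (x : ℝ) : ℂ := ψ x * conj (ψ' x) - ψ' x * conj (ψ x)

theorem conjWronskian_eq {q : ℝ → ℝ} {ψ ψ' : ℝ → ℂ} (hψ : ∀ x, HasDerivAt ψ (ψ' x) x)
    (hψ' : ∀ x, HasDerivAt ψ' (-(q x * ψ x)) x) (x y : ℝ) :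
    conjWronskian ψ ψ' x = conjWronskian ψ ψ' y := by
  have hW : ∀ x, HasDerivAt (conjWronskian ψ ψ') 0 x := fun x => by
    refine (((hψ x).mul (hψ' x).star).sub ((hψ' x).mul (hψ x).star)).congr_deriv ?_
    simp only [star_mul', star_neg, Complex.star_def, conj_ofReal]
    ring
  exact is_const_of_deriv_eq_zero (fun x => (hW x).differentiableAt) (fun x => (hW x).deriv) x y

theorem conjWronskian_eq_of_tendsto_sub_planeWave {k : ℝ} {ψ ψ' : ℝ → ℂ} {a b W : ℂ}
    {l : Filter ℝ} (hW : ∀ x, conjWronskian ψ ψ' x = W)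
    (hs : ∃ s : ℕ → ℝ, Tendsto s atTop l ∧ ∀ n, exp (I * k * s n) = 1)
    (h : Tendsto (fun x => ψ x - planeWave k a b x) l (𝓝 0))
    (h' : Tendsto (fun x => ψ' x - planeWave k (-(I * k * a)) (I * k * b) x) l (𝓝 0)) :
    W = 2 * I * k * (normSq a - normSq b) := by
  obtain ⟨s, hs, hone⟩ := hs
  have hψs : Tendsto (fun n => ψ (s n)) atTop (𝓝 (a + b)) :=
    tendsto_sub_nhds_zero_iff.1 <| by
      simpa [Function.comp_def, planeWave_of_exp_eq_one (hone _)] using h.comp hs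
  have hψ's : Tendsto (fun n => ψ' (s n)) atTop (𝓝 (-(I * k * a) + I * k * b)) :=
    tendsto_sub_nhds_zero_iff.1 <| by
      simpa [Function.comp_def, planeWave_of_exp_eq_one (hone _)] using h'.comp hs
  have hlim := (hψs.mul (continuous_conj.continuousAt.tendsto.comp hψ's)).sub
    (hψ's.mul (continuous_conj.continuousAt.tendsto.comp hψs))
  have hWs := tendsto_nhds_unique (tendsto_const_nhds.congr fun n => (hW (s n)).symm) hlim
  rw [hWs]
  simp only [map_add, map_neg, map_mul, conj_I, conj_ofReal]
  rw [normSq_eq_conj_mul_self, normSq_eq_conj_mul_self]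
  ring

theorem exists_seq_tendsto_atTop_exp_eq_one {k : ℝ} (hk : k ≠ 0) :
    ∃ s : ℕ → ℝ, Tendsto s atTop atTop ∧ ∀ n, exp (I * k * s n) = 1 := by
  refine ⟨fun n => n * (2 * π / |k|), tendsto_natCast_atTop_atTop.atTop_mul_const
    (by positivity), fun n => exp_eq_one_iff.2 ?_⟩
  have hk' : (k : ℂ) ≠ 0 := ofReal_ne_zero.2 hk
  rcases abs_choice k with habs | habs
  · exact ⟨n, by rw [habs]; push_cast; field_simp⟩
  · exact ⟨-n, by rw [habs]; push_cast; field_simp⟩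

theorem Continuous.exists_forall_norm_le {E : Type*} [NormedAddCommGroup E] {f : ℝ → E}
    (hf : Continuous f) {A B : ℝ} (htop : ∀ᶠ x in atTop, ‖f x‖ ≤ A)
    (hbot : ∀ᶠ x in atBot, ‖f x‖ ≤ B) : ∃ C, ∀ x, ‖f x‖ ≤ C := by
  obtain ⟨b, hb⟩ := eventually_atTop.1 htop
  obtain ⟨a, ha⟩ := eventually_atBot.1 hbot
  obtain ⟨C, hC⟩ := (isCompact_Icc (a := a) (b := b)).exists_bound_of_continuousOn hf.continuousOn
  refine ⟨max C (max A B), fun x => ?_⟩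
  rcases le_total x a with hxa | hxa
  · exact (ha x hxa).trans (by simp)
  rcases le_total b x with hxb | hxb
  · exact (hb x hxb).trans (by simp)
  · exact (hC x ⟨hxa, hxb⟩).trans (le_max_left _ _)

theorem eventually_norm_le_of_tendsto_sub_planeWave {k : ℝ} {a b : ℂ} {ψ : ℝ → ℂ} {l : Filter ℝ}
    (h : Tendsto (fun x => ψ x - planeWave k a b x) l (𝓝 0)) :
    ∀ᶠ x in l, ‖ψ x‖ ≤ 1 + (‖a‖ + ‖b‖) := by
  filter_upwards [(tendsto_zero_iff_norm_tendsto_zero.1 h).eventually_le_const one_pos] with x hx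
  calc ‖ψ x‖ ≤ ‖ψ x - planeWave k a b x‖ + ‖planeWave k a b x‖ := norm_le_norm_sub_add _ _
    _ ≤ 1 + (‖a‖ + ‖b‖) := add_le_add hx (norm_planeWave_le k a b x)

theorem integrable_ofReal_mul_of_norm_le {V : ℝ → ℝ} {ψ : ℝ → ℂ}
    (hV : Integrable (fun x => |V x| * (1 + |x|)))
    (hmeas : AEStronglyMeasurable (fun x => (V x : ℂ) * ψ x)) {C : ℝ} (hC : ∀ x, ‖ψ x‖ ≤ C) :
    Integrable (fun x => (V x : ℂ) * ψ x) := by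
  refine (hV.const_mul C).mono' hmeas (ae_of_all _ fun x => ?_)
  rw [norm_mul, norm_real, Real.norm_eq_abs]
  calc |V x| * ‖ψ x‖ ≤ |V x| * C := mul_le_mul_of_nonneg_left (hC x) (abs_nonneg _)
    _ ≤ C * (|V x| * (1 + |x|)) := by
      nlinarith [mul_nonneg (mul_nonneg ((norm_nonneg _).trans (hC x)) (abs_nonneg (V x)))
        (abs_nonneg x)]

theorem IsScatteringData.normSq_add_normSq {V : ℝ → ℝ} {k : ℝ} {T R : ℂ}
    (hV : Integrable (fun x => |V x| * (1 + |x|))) (hk : k ≠ 0)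
    (hTR : IsScatteringData V k T R) :
    normSq R + normSq T = 1 := by
  obtain ⟨ψ, hC2, hODE, hbot, htop⟩ := hTR
  have htop' : Tendsto (fun x => ψ x - planeWave k 1 R x) atTop (𝓝 0) := by
    simpa [planeWave] using htop
  have hbot' : Tendsto (fun x => ψ x - planeWave k T 0 x) atBot (𝓝 0) := by
    simpa [planeWave] using hbot
  obtain ⟨hψd, -, hψ'C1⟩ := contDiff_succ_iff_deriv.1 (show ContDiff ℝ (1 + 1) ψ from hC2)
  have hψ : ∀ x, HasDerivAt ψ (deriv ψ x) x := fun x => (hψd x).hasDerivAt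
  have hψ' : ∀ x, HasDerivAt (deriv ψ) (-(V x * ψ x) - k ^ 2 * ψ x) x := fun x =>
    ((hψ'C1.differentiable one_ne_zero x).hasDerivAt).congr_deriv (by linear_combination -hODE x)
  obtain ⟨C, hC⟩ := hC2.continuous.exists_forall_norm_le
    (eventually_norm_le_of_tendsto_sub_planeWave htop')
    (eventually_norm_le_of_tendsto_sub_planeWave hbot')
  have hVψ : Continuous (fun x => (V x : ℂ) * ψ x) := by
    rw [show (fun x => (V x : ℂ) * ψ x) = fun x => -(deriv (deriv ψ) x + k ^ 2 * ψ x) from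
      funext fun x => by linear_combination -hODE x]
    exact ((hψ'C1.continuous_deriv le_rfl).add (continuous_const.mul hC2.continuous)).neg
  have hf := (integrable_ofReal_mul_of_norm_le hV hVψ.aestronglyMeasurable hC).neg
  have hdtop := tendsto_deriv_sub_atTop_of_tendsto_sub hk hψ hψ' (hasDerivAt_planeWave k 1 R)
    (hasDerivAt_planeWave_deriv k 1 R) hf.integrableOn htop'
  have hdbot := tendsto_deriv_sub_atBot_of_tendsto_sub hk hψ hψ' (hasDerivAt_planeWave k T 0)
    (hasDerivAt_planeWave_deriv k T 0) hf.integrableOn hbot'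
  have hW := conjWronskian_eq (q := fun x => V x + k ^ 2) hψ
    (fun x => (hψ' x).congr_deriv (by push_cast; ring))
  obtain ⟨s, hs, hone⟩ := exists_seq_tendsto_atTop_exp_eq_one hk
  have hWtop := conjWronskian_eq_of_tendsto_sub_planeWave (fun x => hW x 0) ⟨s, hs, hone⟩
    htop' hdtop
  have hWbot := conjWronskian_eq_of_tendsto_sub_planeWave (fun x => hW x 0)
    ⟨fun n => -s n, tendsto_neg_atTop_atBot.comp hs, fun n => by
      rw [ofReal_neg, mul_neg, Complex.exp_neg, hone, inv_one]⟩ hbot' hdbot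
  have hflux := hWtop.symm.trans hWbot
  rw [mul_right_inj' (by simp [hk] : (2 * I * k : ℂ) ≠ 0)] at hflux
  simp only [normSq_one, normSq_zero, ofReal_one, ofReal_zero] at hflux
  exact_mod_cast (by linear_combination -hflux : (normSq R : ℂ) + normSq T = 1)

/-- the reflection coefficient of a Schrödinger operator with
Faddeev-class potential satisfies `|R| ≤ 1`. -/
theorem reflection_coefficient_le_one (V : ℝ → ℝ)
    (hV : Integrable (fun x => |V x| * (1 + |x|)))
    (k : ℝ) (hk : k ≠ 0) (T R : ℂ)
    (hTR : IsScatteringData V k T R) :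
    ‖R‖ ≤ 1 := by
  have hR : ‖R‖ ^ 2 ≤ 1 := by
    rw [Complex.sq_norm]
    linarith [hTR.normSq_add_normSq hV hk, normSq_nonneg T]
  exact (pow_le_one_iff_of_nonneg (norm_nonneg R) two_ne_zero).1 hR
end
end

section
/- Let N be a positive natural number and consider the Pöschl–Teller potential y(x) = sech²(x) with coupling χ = N(N+1). Then the set of negative eigenvalues of the Schrödinger operator -d²/dx² - N(N+1) sech²(x) (i.e., of H₁(χ·y)) is exactly {-n² : n ∈ ℕ, 1 ≤ n ≤ N}. -/
open MeasureTheory Filter Real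

noncomputable section

/-!
Write `H_a = -d²/dx² - a sech² x` and, for the superpotential `W = k tanh`, `A = d/dx + W`,
`A† = -d/dx + W`. Since `tanh' = 1 - tanh²`, the operators factor as
`A† A = H_{k(k+1)} + k²` and `A A† = H_{(k-1)k} + k²`. So `A` maps an eigenfunction of
`H_{k(k+1)}` with eigenvalue `-κ²` to one of `H_{(k-1)k}` with the same eigenvalue, unless
`A ψ = 0`, which forces `κ = k`; and `A†` maps back. Descending from `N(N+1)` to the free operator
`H_0`, which has no negative eigenvalue, shows that `κ ∈ {1, …, N}`; ascending from the ground state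
`sechⁿ` of `H_{n(n+1)}` shows that each `-n²` occurs. The ladder operators preserve
square-integrability because a square-integrable solution of `ψ'' = V ψ` with bounded `V` has a
square-integrable derivative.
-/

open Set
open scoped ContDiff

namespace Real

theorem hasDerivAt_tanh (x : ℝ) : HasDerivAt tanh (1 - tanh x ^ 2) x := by
  rw [show tanh = fun x => sinh x / cosh x from funext tanh_eq_sinh_div_cosh]
  refine ((hasDerivAt_sinh x).div (hasDerivAt_cosh x) (cosh_pos x).ne').congr_deriv ?_
  field_simp

theorem deriv_tanh : deriv tanh = fun x => 1 - tanh x ^ 2 :=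
  funext fun x => (hasDerivAt_tanh x).deriv

theorem differentiable_tanh : Differentiable ℝ tanh :=
  fun x => (hasDerivAt_tanh x).differentiableAt

theorem contDiff_tanh {n : WithTop ℕ∞} : ContDiff ℝ n tanh := by
  rw [show tanh = fun x => sinh x / cosh x from funext tanh_eq_sinh_div_cosh]
  exact contDiff_sinh.div contDiff_cosh fun x => (cosh_pos x).ne'

theorem abs_tanh_le_one (x : ℝ) : |tanh x| ≤ 1 :=
  abs_le.2 ⟨(neg_one_lt_tanh x).le, (tanh_lt_one x).le⟩

theorem one_div_cosh_sq (x : ℝ) : (1 / cosh x) ^ 2 = 1 - tanh x ^ 2 := by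
  rw [tanh_eq_sinh_div_cosh]
  field_simp
  linear_combination -cosh_sq_sub_sinh_sq x

theorem hasDerivAt_one_div_cosh_pow (n : ℕ) (x : ℝ) :
    HasDerivAt (fun x => (1 / cosh x) ^ n) (-(n * tanh x * (1 / cosh x) ^ n)) x := by
  simp only [one_div]
  refine (((hasDerivAt_cosh x).inv (cosh_pos x).ne').pow n).congr_deriv ?_
  rw [tanh_eq_sinh_div_cosh]
  rcases n with _ | n
  · simp
  · rw [Nat.add_sub_cancel, Pi.inv_apply, pow_succ]
    ring

theorem integrable_one_div_cosh_sq : Integrable fun x => (1 / cosh x) ^ 2 := by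
  have hcont : Continuous fun x => (1 / cosh x) ^ 2 := by
    simp only [one_div]
    exact (continuous_cosh.inv₀ fun x => (cosh_pos x).ne').pow 2
  refine integrable_of_intervalIntegral_norm_bounded 2 (fun _ => hcont.integrableOn_Ioc)
    tendsto_neg_atTop_atBot tendsto_id (Eventually.of_forall fun i => ?_)
  have hftc : ∫ x in -i..i, (1 / cosh x) ^ 2 = tanh i - tanh (-i) := by
    refine intervalIntegral.integral_eq_sub_of_hasDerivAt (fun x _ => ?_)
      (hcont.intervalIntegrable _ _)
    rw [one_div_cosh_sq]
    exact hasDerivAt_tanh x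
  simp only [id, norm_pow, Real.norm_eq_abs, sq_abs, hftc]
  linarith [(abs_le.1 (abs_tanh_le_one i)).2, (abs_le.1 (abs_tanh_le_one (-i))).1]

end Real

def schrodinger (y f : ℝ → ℝ) : ℝ → ℝ := fun x => -deriv (deriv f) x - y x * f x

def annihilation (W f : ℝ → ℝ) : ℝ → ℝ := fun x => deriv f x + W x * f x

def creation (W f : ℝ → ℝ) : ℝ → ℝ := fun x => -deriv f x + W x * f x

theorem isNegEig_one_iff {y : ℝ → ℝ} {κ : ℝ} :
    IsNegEig 1 y κ ↔ 0 < κ ∧ ∃ ψ : ℝ → ℝ, ψ ≠ 0 ∧ ContDiff ℝ 2 ψ ∧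
      Integrable (fun x => ψ x ^ 2) ∧ schrodinger y ψ = (-κ ^ 2) • ψ := by
  simp only [IsNegEig, schrodinger, funext_iff, Pi.smul_apply, smul_eq_mul, one_pow, neg_mul,
    one_mul]

section Factorization

variable {W f : ℝ → ℝ}

theorem deriv_annihilation (hW : Differentiable ℝ W) (hf : ContDiff ℝ 2 f) (x : ℝ) :
    deriv (annihilation W f) x = deriv (deriv f) x + (deriv W x * f x + W x * deriv f x) :=
  ((hf.differentiable_deriv_two x).hasDerivAt.add
    ((hW x).hasDerivAt.mul (hf.differentiable two_ne_zero x).hasDerivAt)).deriv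

theorem deriv_creation (hW : Differentiable ℝ W) (hf : ContDiff ℝ 2 f) (x : ℝ) :
    deriv (creation W f) x = -deriv (deriv f) x + (deriv W x * f x + W x * deriv f x) :=
  ((hf.differentiable_deriv_two x).hasDerivAt.neg.add
    ((hW x).hasDerivAt.mul (hf.differentiable two_ne_zero x).hasDerivAt)).deriv

theorem creation_annihilation (hW : Differentiable ℝ W) (hf : ContDiff ℝ 2 f) :
    creation W (annihilation W f) = schrodinger (fun x => deriv W x - W x ^ 2) f := by
  ext x
  simp only [creation, schrodinger, deriv_annihilation hW hf x, annihilation]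
  ring

theorem annihilation_creation (hW : Differentiable ℝ W) (hf : ContDiff ℝ 2 f) :
    annihilation W (creation W f) = schrodinger (fun x => -deriv W x - W x ^ 2) f := by
  ext x
  simp only [annihilation, schrodinger, deriv_creation hW hf x, creation]
  ring

theorem annihilation_smul (c : ℝ) : annihilation W (c • f) = c • annihilation W f := by
  ext x
  simp only [annihilation, deriv_const_smul_field, Pi.smul_apply, smul_eq_mul]
  ring

theorem creation_zero : creation W 0 = 0 := by
  ext x
  simp [creation]

end Factorization

def poschlTeller (a : ℝ) : ℝ → ℝ := fun x => a * (1 / cosh x) ^ 2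

@[simp]
theorem poschlTeller_zero : poschlTeller 0 = 0 := by
  ext x
  simp [poschlTeller]

theorem contDiff_poschlTeller (a : ℝ) : ContDiff ℝ ∞ (poschlTeller a) := by
  unfold poschlTeller
  simp only [one_div_cosh_sq]
  exact contDiff_const.mul (contDiff_const.sub (contDiff_tanh.pow 2))

theorem abs_poschlTeller_le (a x : ℝ) : |poschlTeller a x| ≤ |a| := by
  rw [poschlTeller, abs_mul, one_div_cosh_sq]
  have htanh := abs_le.1 (abs_tanh_le_one x)
  exact mul_le_of_le_one_right (abs_nonneg a) (abs_le.2 ⟨by nlinarith, by nlinarith⟩)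

theorem creation_annihilation_tanh {f : ℝ → ℝ} (k : ℝ) (hf : ContDiff ℝ 2 f) :
    creation (fun x => k * tanh x) (annihilation (fun x => k * tanh x) f) =
      schrodinger (poschlTeller (k * (k + 1))) f + k ^ 2 • f := by
  rw [creation_annihilation (differentiable_tanh.const_mul k) hf]
  ext x
  simp only [schrodinger, poschlTeller, one_div_cosh_sq, deriv_const_mul_field', deriv_tanh,
    Pi.add_apply, Pi.smul_apply, smul_eq_mul]
  ring

theorem annihilation_creation_tanh {f : ℝ → ℝ} (k : ℝ) (hf : ContDiff ℝ 2 f) :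
    annihilation (fun x => k * tanh x) (creation (fun x => k * tanh x) f) =
      schrodinger (poschlTeller ((k - 1) * k)) f + k ^ 2 • f := by
  rw [annihilation_creation (differentiable_tanh.const_mul k) hf]
  ext x
  simp only [schrodinger, poschlTeller, one_div_cosh_sq, deriv_const_mul_field', deriv_tanh,
    Pi.add_apply, Pi.smul_apply, smul_eq_mul]
  ring

section Regularity

variable {y ψ : ℝ → ℝ} {E : ℝ}

theorem deriv_deriv_of_schrodinger_eq (h : schrodinger y ψ = E • ψ) (x : ℝ) :
    deriv (deriv ψ) x = -(E + y x) * ψ x := by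
  have := congrFun h x
  simp only [schrodinger, Pi.smul_apply, smul_eq_mul] at this
  linarith

theorem contDiff_infty_of_schrodinger_eq (hy : ContDiff ℝ ∞ y) (hψ : ContDiff ℝ 2 ψ)
    (h : schrodinger y ψ = E • ψ) : ContDiff ℝ ∞ ψ := by
  have hψ'' : deriv (deriv ψ) = fun x => -(E + y x) * ψ x :=
    funext (deriv_deriv_of_schrodinger_eq h)
  have hbootstrap : ∀ n : ℕ, ContDiff ℝ (n + 2) ψ := by
    intro n
    induction n with
    | zero => simpa using hψ
    | succ n ih =>
      have hy' : ContDiff ℝ (n + 1) fun x => -(E + y x) :=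
        (contDiff_const.add (hy.of_le (by exact_mod_cast le_top))).neg
      rw [show ((n + 1 : ℕ) + 2 : WithTop ℕ∞) = n + 1 + 1 + 1 by push_cast; ring,
        contDiff_succ_iff_deriv, contDiff_succ_iff_deriv, hψ'']
      exact ⟨hψ.differentiable two_ne_zero, by simp, hψ.differentiable_deriv_two, by simp,
        hy'.mul (ih.of_le (by norm_cast; omega))⟩
  exact contDiff_infty.2 fun n => (hbootstrap n).of_le (by norm_cast; omega)

theorem abs_deriv_deriv_le_of_schrodinger_eq {B : ℝ} (hy : ∀ x, |y x| ≤ B)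
    (h : schrodinger y ψ = E • ψ) (x : ℝ) : |deriv (deriv ψ) x| ≤ (|E| + B) * |ψ x| := by
  rw [deriv_deriv_of_schrodinger_eq h, abs_mul, abs_neg]
  exact mul_le_mul_of_nonneg_right ((abs_add_le _ _).trans (by linarith [hy x])) (abs_nonneg _)

end Regularity

section SquareIntegrability

theorem not_integrableOn_Ici_of_le {g : ℝ → ℝ} {a c : ℝ} (hc : 0 < c)
    (hg : ∀ x ∈ Ici a, c ≤ g x) : ¬ IntegrableOn g (Ici a) := by
  intro hint
  have hconst : IntegrableOn (fun _ => c) (Ici a) :=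
    hint.mono' aestronglyMeasurable_const <| (ae_restrict_iff' measurableSet_Ici).2 <|
      Eventually.of_forall fun x hx => by
        rw [Real.norm_of_nonneg hc.le]; exact hg x hx
  rw [integrableOn_const_iff (by simp)] at hconst
  simp [hc.ne'] at hconst

variable {f : ℝ → ℝ} {C : ℝ}

theorem intervalIntegral_deriv_sq_le (hf : ContDiff ℝ 2 f)
    (hf'' : ∀ x, |deriv (deriv f) x| ≤ C * |f x|) (hint : Integrable fun x => f x ^ 2) {b : ℝ}
    (hb : 0 ≤ b) :
    ∫ x in 0..b, deriv f x ^ 2 ≤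
      f b * deriv f b + (|f 0 * deriv f 0| + |C| * ∫ x, f x ^ 2) := by
  have hf' := hf.continuous_deriv one_le_two
  have hf''c : Continuous (deriv (deriv f)) := hf.deriv'.continuous_deriv_one
  have hfc := hf.continuous
  have hftc : ∫ x in 0..b, (deriv f x ^ 2 + f x * deriv (deriv f) x) =
      f b * deriv f b - f 0 * deriv f 0 := by
    refine intervalIntegral.integral_eq_sub_of_hasDerivAt (f := fun x => f x * deriv f x)
      (fun x _ => ?_) (Continuous.intervalIntegrable (by fun_prop) _ _)
    exact ((hf.differentiable two_ne_zero x).hasDerivAt.mul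
      (hf.differentiable_deriv_two x).hasDerivAt).congr_deriv (by ring)
  rw [intervalIntegral.integral_add (Continuous.intervalIntegrable (by fun_prop) _ _)
    (Continuous.intervalIntegrable (by fun_prop) _ _)] at hftc
  have hcross : -(∫ x in 0..b, f x * deriv (deriv f) x) ≤ |C| * ∫ x, f x ^ 2 :=
    calc -(∫ x in 0..b, f x * deriv (deriv f) x)
        ≤ ∫ x in 0..b, |f x * deriv (deriv f) x| :=
          (neg_le_abs _).trans (intervalIntegral.abs_integral_le_integral_abs hb)
      _ ≤ ∫ x in 0..b, |C| * f x ^ 2 := by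
          refine intervalIntegral.integral_mono_on hb
            (Continuous.intervalIntegrable (by fun_prop) _ _)
            (hint.const_mul _).intervalIntegrable fun x _ => ?_
          rw [abs_mul, ← sq_abs (f x), sq, ← mul_assoc]
          nlinarith [mul_le_mul_of_nonneg_left (hf'' x) (abs_nonneg (f x)),
            mul_le_mul_of_nonneg_right (le_abs_self C) (mul_self_nonneg |f x|)]
      _ = |C| * ∫ x in Ioc 0 b, f x ^ 2 := by
          rw [intervalIntegral.integral_const_mul, intervalIntegral.integral_of_le hb]
      _ ≤ |C| * ∫ x, f x ^ 2 :=
          mul_le_mul_of_nonneg_left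
            (setIntegral_le_integral hint (Eventually.of_forall fun x => sq_nonneg _))
            (abs_nonneg C)
  linarith [neg_abs_le (f 0 * deriv f 0)]

theorem integrableOn_Ioi_deriv_sq (hf : ContDiff ℝ 2 f)
    (hf'' : ∀ x, |deriv (deriv f) x| ≤ C * |f x|) (hint : Integrable fun x => f x ^ 2) :
    IntegrableOn (fun x => deriv f x ^ 2) (Ioi 0) := by
  have hf' := hf.continuous_deriv one_le_two
  have hfd := hf.differentiable two_ne_zero
  set K := |f 0 * deriv f 0| + |C| * ∫ x, f x ^ 2
  by_contra hnot
  obtain ⟨b₀, hb₀K, hb₀⟩ : ∃ b₀, K + 1 < ∫ x in 0..b₀, deriv f x ^ 2 ∧ 0 ≤ b₀ := by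
    have := mt (integrableOn_Ioi_of_intervalIntegral_norm_bounded (K + 1) 0
      (fun _ => Continuous.integrableOn_Ioc (by fun_prop)) tendsto_id) hnot
    obtain ⟨b, hb, hb0⟩ :=
      ((Filter.not_eventually.1 this).and_eventually (eventually_ge_atTop 0)).exists
    exact ⟨b, by simpa using hb, hb0⟩
  -- once `∫₀ᵇ f'²` is large, `intervalIntegral_deriv_sq_le` forces `f f' > 1`, so `f²` increases
  have hff' : ∀ x ∈ Ici b₀, 1 < f x * deriv f x := fun x hx => by
    have hmono : ∫ t in 0..b₀, deriv f t ^ 2 ≤ ∫ t in 0..x, deriv f t ^ 2 :=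
      intervalIntegral.integral_mono_interval le_rfl hb₀ hx
        (Eventually.of_forall fun _ => sq_nonneg _)
        (Continuous.intervalIntegrable (by fun_prop) _ _)
    linarith [intervalIntegral_deriv_sq_le hf hf'' hint (hb₀.trans hx)]
  have hsq_mono : MonotoneOn (fun x => f x ^ 2) (Ici b₀) := by
    refine monotoneOn_of_deriv_nonneg (convex_Ici b₀) (hfd.continuous.pow 2).continuousOn
      (fun x _ => ((hfd x).pow 2).differentiableWithinAt) fun x hx => ?_
    rw [interior_Ici] at hx
    rw [((hfd x).hasDerivAt.fun_pow 2).deriv]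
    norm_num
    nlinarith [hff' x (mem_Ici.2 (le_of_lt hx))]
  have hpos : 0 < f b₀ ^ 2 := by
    have hne : f b₀ ≠ 0 := fun h0 => by linarith [h0 ▸ hff' b₀ self_mem_Ici]
    positivity
  exact not_integrableOn_Ici_of_le hpos (fun x hx => hsq_mono self_mem_Ici hx hx)
    hint.integrableOn

theorem deriv_deriv_comp_neg (f : ℝ → ℝ) (x : ℝ) :
    deriv (deriv fun x => f (-x)) x = deriv (deriv f) (-x) := by
  rw [show deriv (fun x => f (-x)) = fun x => -deriv f (-x) from funext (deriv_comp_neg f)]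
  simp [deriv_comp_neg]

theorem integrable_deriv_sq (hf : ContDiff ℝ 2 f)
    (hf'' : ∀ x, |deriv (deriv f) x| ≤ C * |f x|) (hint : Integrable fun x => f x ^ 2) :
    Integrable fun x => deriv f x ^ 2 := by
  have hleft : IntegrableOn (fun x => deriv f x ^ 2) (Iic 0) := by
    have hint' : Integrable fun x => f (-x) ^ 2 := hint.comp_neg
    have hf''' : ∀ x, |deriv (deriv fun x => f (-x)) x| ≤ C * |f (-x)| := fun x => by
      rw [deriv_deriv_comp_neg]; exact hf'' (-x)
    have hreflected :=
      integrableOn_Ioi_deriv_sq (f := fun x => f (-x)) (hf.comp contDiff_neg) hf''' hint'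
    rw [show (fun x => deriv (fun x => f (-x)) x ^ 2) = fun x => deriv f (-x) ^ 2 from
      funext fun x => by rw [deriv_comp_neg, neg_sq], ← neg_zero] at hreflected
    rw [integrableOn_Iic_iff_integrableOn_Iio]
    simpa only [neg_neg] using hreflected.comp_neg_Iio
  rw [← integrableOn_univ, ← Iic_union_Ioi (a := (0 : ℝ))]
  exact hleft.union (integrableOn_Ioi_deriv_sq hf hf'' hint)

end SquareIntegrability

theorem eq_zero_of_deriv_deriv_eq_sq_mul {ψ : ℝ → ℝ} {κ : ℝ} (hκ : κ ≠ 0) (hψ : ContDiff ℝ 2 ψ)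
    (heq : ∀ x, deriv (deriv ψ) x = κ ^ 2 * ψ x) (hint : Integrable fun x => ψ x ^ 2) :
    ψ = 0 := by
  have hd : Integrable fun x => deriv ψ x ^ 2 :=
    integrable_deriv_sq hψ (fun x => by rw [heq, abs_mul, abs_sq]) hint
  have hψc := hψ.continuous
  have hψ' := hψ.continuous_deriv one_le_two
  have hprod : Integrable fun x => ψ x * deriv ψ x :=
    (hint.add hd).mono' (by fun_prop) <| Eventually.of_forall fun x => by
      rw [Pi.add_apply, Real.norm_eq_abs, abs_mul]
      nlinarith [sq_nonneg (|ψ x| - |deriv ψ x|), sq_abs (ψ x), sq_abs (deriv ψ x)]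
  -- the energy `∫ ψ'² + κ² ψ²` is the integral of the derivative of the integrable `ψ ψ'`
  have henergy : ∫ x, (deriv ψ x ^ 2 + κ ^ 2 * ψ x ^ 2) = 0 :=
    integral_eq_zero_of_hasDerivAt_of_integrable (fun x =>
      ((hψ.differentiable two_ne_zero x).hasDerivAt.mul
        (hψ.differentiable_deriv_two x).hasDerivAt).congr_deriv (by rw [heq]; ring))
      (hd.add (hint.const_mul _)) hprod
  rw [integral_add hd (hint.const_mul _), integral_const_mul] at henergy
  have hzero : ∫ x, ψ x ^ 2 = 0 := by
    have : 0 ≤ ∫ x, deriv ψ x ^ 2 := integral_nonneg fun x => sq_nonneg _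
    have : 0 ≤ ∫ x, ψ x ^ 2 := integral_nonneg fun x => sq_nonneg _
    have : 0 < κ ^ 2 := by positivity
    nlinarith
  have hae := (integral_eq_zero_iff_of_nonneg (fun x => sq_nonneg (ψ x)) hint).1 hzero
  have hsq := (Continuous.ae_eq_iff_eq volume (hψc.pow 2) continuous_zero).1 hae
  funext x
  exact pow_eq_zero_iff two_ne_zero |>.1 (congrFun hsq x)

theorem integrable_sq_add_mul {f g W : ℝ → ℝ} {c : ℝ} (hf : Integrable fun x => f x ^ 2)
    (hg : Integrable fun x => g x ^ 2) (hW : ∀ x, |W x| ≤ c)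
    (hcont : Continuous fun x => f x + W x * g x) :
    Integrable fun x => (f x + W x * g x) ^ 2 := by
  refine ((hf.const_mul 2).add (hg.const_mul (2 * c ^ 2))).mono'
    (hcont.pow 2).aestronglyMeasurable (Eventually.of_forall fun x => ?_)
  have hWsq : W x ^ 2 ≤ c ^ 2 := sq_le_sq' (abs_le.1 (hW x)).1 (abs_le.1 (hW x)).2
  rw [Pi.add_apply, Real.norm_of_nonneg (sq_nonneg _)]
  nlinarith [sq_nonneg (f x - W x * g x), mul_le_mul_of_nonneg_right hWsq (sq_nonneg (g x))]

theorem not_isNegEig_zero {κ : ℝ} : ¬ IsNegEig 1 0 κ := fun h => by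
  obtain ⟨hκ, ψ, hψ0, hψ, hint, heq⟩ := isNegEig_one_iff.1 h
  refine hψ0 (eq_zero_of_deriv_deriv_eq_sq_mul hκ.ne' hψ (fun x => ?_) hint)
  simp [deriv_deriv_of_schrodinger_eq heq]

theorem isNegEig_poschlTeller_self {n : ℕ} (hn : 0 < n) :
    IsNegEig 1 (poschlTeller (n * (n + 1))) n := by
  set ψ : ℝ → ℝ := fun x => (1 / cosh x) ^ n
  have hψ : ContDiff ℝ 2 ψ := by
    simp only [ψ, one_div]
    exact (contDiff_cosh.inv fun x => (cosh_pos x).ne').pow n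
  have hAψ : annihilation (fun x => n * tanh x) ψ = 0 := by
    ext x
    simp only [annihilation, (hasDerivAt_one_div_cosh_pow n x).deriv, Pi.zero_apply, ψ]
    ring
  have hground := creation_annihilation_tanh n hψ
  rw [hAψ, creation_zero] at hground
  refine isNegEig_one_iff.2 ⟨by positivity, ψ, fun h0 => by simpa [ψ] using congrFun h0 0, hψ,
    ?_, ?_⟩
  · refine integrable_one_div_cosh_sq.mono' (hψ.continuous.pow 2).aestronglyMeasurable
      (Eventually.of_forall fun x => ?_)
    have h0 : 0 ≤ 1 / cosh x := by positivity
    have h1 : 1 / cosh x ≤ 1 := div_le_one_of_le₀ (one_le_cosh x) (cosh_pos x).le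
    rw [Real.norm_of_nonneg (by positivity), ← pow_mul, mul_comm]
    exact pow_le_pow_of_le_one h0 h1 (by omega)
  · rw [neg_smul, eq_neg_iff_add_eq_zero, hground]

theorem IsNegEig.poschlTeller_lower {k κ : ℝ} (hκk : κ ^ 2 ≠ k ^ 2)
    (h : IsNegEig 1 (poschlTeller (k * (k + 1))) κ) :
    IsNegEig 1 (poschlTeller ((k - 1) * k)) κ := by
  obtain ⟨hκ, ψ, hψ0, hψ2, hint, heq⟩ := isNegEig_one_iff.1 h
  set W : ℝ → ℝ := fun x => k * tanh x
  have hψ := contDiff_infty_of_schrodinger_eq (contDiff_poschlTeller _) hψ2 heq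
  have hφ : ContDiff ℝ ∞ (annihilation W ψ) :=
    (contDiff_infty_iff_deriv.1 hψ).2.add ((contDiff_const.mul contDiff_tanh).mul hψ)
  have hAdjA : creation W (annihilation W ψ) = (k ^ 2 - κ ^ 2) • ψ := by
    rw [creation_annihilation_tanh k hψ2, heq, ← add_smul]
    ring_nf
  refine isNegEig_one_iff.2 ⟨hκ, annihilation W ψ, fun h0 => ?_, hφ.of_le (by norm_cast), ?_, ?_⟩
  · rw [h0, creation_zero] at hAdjA
    exact hψ0 ((smul_eq_zero.1 hAdjA.symm).resolve_left (sub_ne_zero.2 hκk.symm))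
  · refine integrable_sq_add_mul (c := |k|)
      (integrable_deriv_sq hψ2 (abs_deriv_deriv_le_of_schrodinger_eq
        (abs_poschlTeller_le _) heq) hint) hint (fun x => ?_) hφ.continuous
    rw [abs_mul]
    exact mul_le_of_le_one_right (abs_nonneg k) (abs_tanh_le_one x)
  · have hAAdj := annihilation_creation_tanh k (hφ.of_le (by norm_cast))
    rw [hAdjA, annihilation_smul] at hAAdj
    ext x
    have := congrFun hAAdj x
    simp only [Pi.smul_apply, Pi.add_apply, smul_eq_mul] at this ⊢
    linarith

/-- `annihilation (fun x => -k * tanh x) = -creation (fun x => k * tanh x)`, so the converse is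
the same lemma at `-k`. -/
theorem isNegEig_poschlTeller_iff {k κ : ℝ} (hκk : κ ^ 2 ≠ k ^ 2) :
    IsNegEig 1 (poschlTeller (k * (k + 1))) κ ↔ IsNegEig 1 (poschlTeller ((k - 1) * k)) κ := by
  refine ⟨IsNegEig.poschlTeller_lower hκk, fun h => ?_⟩
  rw [show (k - 1) * k = -k * (-k + 1) by ring] at h
  have := IsNegEig.poschlTeller_lower (by rwa [neg_sq]) h
  rwa [show (-k - 1) * -k = k * (k + 1) by ring] at this

theorem exists_nat_of_isNegEig_poschlTeller (N : ℕ) {κ : ℝ}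
    (h : IsNegEig 1 (poschlTeller (N * (N + 1))) κ) : ∃ n : ℕ, 1 ≤ n ∧ n ≤ N ∧ κ = n := by
  induction N with
  | zero => exact absurd (by simpa using h) not_isNegEig_zero
  | succ N ih =>
    by_cases hκN : κ = N + 1
    · exact ⟨N + 1, by omega, le_rfl, by rw [hκN]; push_cast; ring⟩
    have hκk : κ ^ 2 ≠ ((N : ℝ) + 1) ^ 2 := fun hsq =>
      hκN ((sq_eq_sq₀ h.1.le (by positivity)).1 hsq)
    push_cast at h
    rw [isNegEig_poschlTeller_iff hκk, add_sub_cancel_right] at h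
    obtain ⟨n, hn, hnN, rfl⟩ := ih h
    exact ⟨n, hn, by omega, rfl⟩

theorem isNegEig_poschlTeller_of_le {n N : ℕ} (hn : 1 ≤ n) (hnN : n ≤ N) :
    IsNegEig 1 (poschlTeller (N * (N + 1))) n := by
  induction N, hnN using Nat.le_induction with
  | base => exact isNegEig_poschlTeller_self hn
  | succ N hnN ih =>
    have hκk : (n : ℝ) ^ 2 ≠ ((N : ℝ) + 1) ^ 2 := by
      rw [ne_eq, sq_eq_sq₀ (by positivity) (by positivity)]
      exact_mod_cast (Nat.lt_succ_of_le hnN).ne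
    push_cast
    rwa [isNegEig_poschlTeller_iff hκk, add_sub_cancel_right]

theorem poschl_teller_spectrum_general (N : ℕ) :
    {μ : ℝ | ∃ κ : ℝ, 0 < κ ∧ μ = -κ ^ 2 ∧
        IsNegEig 1 (fun x : ℝ => (N * (N + 1) : ℝ) * (1 / Real.cosh x) ^ 2) κ} =
      {μ : ℝ | ∃ n : ℕ, 1 ≤ n ∧ n ≤ N ∧ μ = -(n : ℝ) ^ 2} := by
  ext μ
  constructor
  · rintro ⟨κ, -, rfl, h⟩
    obtain ⟨n, hn, hnN, rfl⟩ := exists_nat_of_isNegEig_poschlTeller N h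
    exact ⟨n, hn, hnN, rfl⟩
  · rintro ⟨n, hn, hnN, rfl⟩
    exact ⟨n, by positivity, rfl, isNegEig_poschlTeller_of_le hn hnN⟩

/-- Pöschl–Teller: the negative eigenvalues of
`-d²/dx² - N(N+1) sech²(x)` are exactly `-n²` for `n = 1, …, N`. -/
theorem poschl_teller_spectrum (N : ℕ) (hN : 0 < N) :
    {μ : ℝ | ∃ κ : ℝ, 0 < κ ∧ μ = -κ ^ 2 ∧
        IsNegEig 1 (fun x : ℝ => (N * (N + 1) : ℝ) * (1 / Real.cosh x) ^ 2) κ} =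
      {μ : ℝ | ∃ n : ℕ, 1 ≤ n ∧ n ≤ N ∧ μ = -(n : ℝ) ^ 2} :=
  poschl_teller_spectrum_general N
end
end
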